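/- Let γ > 0, μ > 0, let α, α̃, c ∈ ℝ^g be vectors and β, β̃ ∈ ℝ be scalars, and set Δα = α − α̃, Δβ = β − β̃, f = α + β·1_g − c, and z̄ = ‖[α̃ + β̃·1_g − c]_+‖₂ + ‖[Δα]_+‖₂ + √g·max(Δβ, 0). If μγ ≥ z̄, then the gradient block ∇ψ(f) = max(1 − μ/‖(1/γ)[f]_+‖₂, 0) · (1/γ)[f]_+ (equal to 0 when [f]_+ = 0) satisfies ∇ψ(f) = 0. -/

import Mathlib

open scoped RealInnerProductSpace

/-- Componentwise positive part `[x]₊ i = max (x i) 0`. -/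
noncomputable def posPart {g : ℕ} (x : EuclideanSpace ℝ (Fin g)) : EuclideanSpace ℝ (Fin g) :=
  WithLp.toLp 2 (fun i => max (x i) 0)

/-- Componentwise negative part `[x]₋ i = min (x i) 0`. -/
noncomputable def negPart {g : ℕ} (x : EuclideanSpace ℝ (Fin g)) : EuclideanSpace ℝ (Fin g) :=
  WithLp.toLp 2 (fun i => min (x i) 0)

/-- The all-ones vector `1_g`. -/
noncomputable def ones (g : ℕ) : EuclideanSpace ℝ (Fin g) := WithLp.toLp 2 (fun _ => 1)

lemma norm_le_of_abs_le {g : ℕ} (u v : EuclideanSpace ℝ (Fin g))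
    (h : ∀ i, |u i| ≤ |v i|) : ‖u‖ ≤ ‖v‖ := by
  rw [EuclideanSpace.norm_eq, EuclideanSpace.norm_eq]
  apply Real.sqrt_le_sqrt
  apply Finset.sum_le_sum
  intro i _
  have := h i
  have h2 : ‖u i‖ ≤ ‖v i‖ := by simpa [Real.norm_eq_abs] using this
  exact pow_le_pow_left₀ (norm_nonneg _) h2 2

/-- Lemma 2: if `μγ ≥ z̄` then the gradient block is zero. -/
theorem grad_zero_of_upper_bound (g : ℕ) (γ μ : ℝ) (hγ : 0 < γ) (hμ : 0 < μ)
    (α αt c : EuclideanSpace ℝ (Fin g)) (β βt : ℝ)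
    (f : EuclideanSpace ℝ (Fin g)) (hf : f = α + β • ones g - c)
    (zbar : ℝ)
    (hz : zbar = ‖posPart (αt + βt • ones g - c)‖ + ‖posPart (α - αt)‖ +
        Real.sqrt g * max (β - βt) 0)
    (h : μ * γ ≥ zbar) :
    (max (1 - μ / ‖(1 / γ) • posPart f‖) 0) • ((1 / γ) • posPart f) = 0 := by
  set A := posPart (αt + βt • ones g - c)
  set B := posPart (α - αt)
  set t := max (β - βt) 0
  -- key bound: ‖posPart f‖ ≤ zbar
  have hones : ‖ones g‖ = Real.sqrt g := by
    rw [EuclideanSpace.norm_eq]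
    simp [ones]
  have hbound : ‖posPart f‖ ≤ zbar := by
    have h1 : ‖posPart f‖ ≤ ‖A + B + t • ones g‖ := by
      apply norm_le_of_abs_le
      intro i
      have hAi : A i = max (αt i + βt - c i) 0 := by
        show max ((αt + βt • ones g - c) i) 0 = _
        simp [ones]
      have hBi : B i = max ((α : EuclideanSpace ℝ (Fin g)) i - αt i) 0 := by
        show max ((α - αt) i) 0 = _
        simp
      have hfi : f i = (αt i + βt - c i) + (α i - αt i) + (β - βt) := by
        rw [hf]; simp [ones]; ring
      have hAnn : 0 ≤ A i := le_max_right _ _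
      have hBnn : 0 ≤ B i := le_max_right _ _
      have htnn : 0 ≤ t := le_max_right _ _
      have hle : max (f i) 0 ≤ A i + B i + t := by
        rw [hfi, hAi, hBi]
        apply max_le
        · have h1 := le_max_left (αt i + βt - c i) (0:ℝ)
          have h2 := le_max_left (α i - αt i) (0:ℝ)
          have h3 := le_max_left (β - βt) (0:ℝ)
          simp only [t]
          linarith
        · positivity
      have hpf : posPart f i = max (f i) 0 := rfl
      have hsum : (A + B + t • ones g) i = A i + B i + t := by
        simp [ones]
      rw [hpf, hsum]
      rw [abs_of_nonneg (le_max_right _ _), abs_of_nonneg (by positivity)]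
      exact hle
    have h2 : ‖A + B + t • ones g‖ ≤ ‖A‖ + ‖B‖ + t * ‖ones g‖ := by
      calc ‖A + B + t • ones g‖ ≤ ‖A + B‖ + ‖t • ones g‖ := norm_add_le _ _
        _ ≤ ‖A‖ + ‖B‖ + ‖t • ones g‖ := by gcongr; exact norm_add_le _ _
        _ = ‖A‖ + ‖B‖ + t * ‖ones g‖ := by
            rw [norm_smul, Real.norm_eq_abs, abs_of_nonneg (le_max_right _ _)]
    have h3 : t * ‖ones g‖ = Real.sqrt g * t := by rw [hones]; ring
    rw [hz]
    linarith [h1.trans h2]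
  by_cases hp : posPart f = 0
  · simp [hp]
  · have hn : 0 < ‖posPart f‖ := norm_pos_iff.mpr hp
    have hns : ‖(1 / γ) • posPart f‖ = ‖posPart f‖ / γ := by
      rw [norm_smul, Real.norm_eq_abs, abs_of_pos (by positivity)]
      ring
    have hle : ‖posPart f‖ / γ ≤ μ := by
      rw [div_le_iff₀ hγ]
      linarith
    have hμdiv : (1 : ℝ) ≤ μ / ‖(1 / γ) • posPart f‖ := by
      rw [hns, le_div_iff₀ (by positivity)]
      linarith
    have : max (1 - μ / ‖(1 / γ) • posPart f‖) 0 = 0 := by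
      rw [max_eq_right]; linarith
    rw [this, zero_smul]
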